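/- Let H = H_{q-1} ⊕ H_q ⊕ H_{q+1} be finite-dimensional inner product spaces with linear maps d_{q-1} : H_{q-1} → H_q and d_q : H_q → H_{q+1} satisfying d_q ∘ d_{q-1} = 0, and let □_j denote the Laplacians d_{j-1} d_{j-1}* + d_j* d_j on H_j. Then for every λ ≥ 0, dim of the span of eigenvectors of □_q with eigenvalue in (0, λ] is at most the sum of dim of the span of eigenvectors of □_{q-1} with eigenvalue in [0,λ] and dim of the span of eigenvectors of □_{q+1} with eigenvalue in [0,λ]. -/
import Mathlib


/-- Finite-dimensional Hodge model.  Let `H_{q-1} , H_q , H_{q+1}` be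
finite-dimensional complex inner product spaces with `d_{q-1} : H_{q-1} → H_q`,
`d_q : H_q → H_{q+1}`, `d_q ∘ d_{q-1} = 0`, and Laplacians
`□_{q-1} = d_{q-1}* d_{q-1}`, `□_q = d_{q-1} d_{q-1}* + d_q* d_q`, `□_{q+1} = d_q d_q*`.
Then for every `λ ≥ 0`, the dimension of the span of eigenvectors of `□_q` with eigenvalue in
`(0,λ]` is at most the sum of the dimensions of the spans of eigenvectors of `□_{q-1}` and of
`□_{q+1}` with eigenvalue in `[0,λ]`. -/
theorem stmt_8 {Hm H0 Hp : Type*}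
    [NormedAddCommGroup Hm] [InnerProductSpace ℂ Hm] [FiniteDimensional ℂ Hm]
    [NormedAddCommGroup H0] [InnerProductSpace ℂ H0] [FiniteDimensional ℂ H0]
    [NormedAddCommGroup Hp] [InnerProductSpace ℂ Hp] [FiniteDimensional ℂ Hp]
    (d1 : Hm →ₗ[ℂ] H0) (d2 : H0 →ₗ[ℂ] Hp) (hd : d2 ∘ₗ d1 = 0)
    (l : ℝ) (hl : 0 ≤ l) :
    Module.finrank ℂ
      ↥(⨆ μ ∈ Set.Ioc (0 : ℝ) l,
        Module.End.eigenspace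
          (d1 ∘ₗ LinearMap.adjoint d1 + LinearMap.adjoint d2 ∘ₗ d2) (μ : ℂ)) ≤
    Module.finrank ℂ
      ↥(⨆ μ ∈ Set.Icc (0 : ℝ) l,
        Module.End.eigenspace (LinearMap.adjoint d1 ∘ₗ d1) (μ : ℂ)) +
    Module.finrank ℂ
      ↥(⨆ μ ∈ Set.Icc (0 : ℝ) l,
        Module.End.eigenspace (d2 ∘ₗ LinearMap.adjoint d2) (μ : ℂ)) := by
  set L : Module.End ℂ H0 :=
    d1 ∘ₗ LinearMap.adjoint d1 + LinearMap.adjoint d2 ∘ₗ d2 with hL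
  set E : Submodule ℂ H0 :=
    ⨆ μ ∈ Set.Ioc (0 : ℝ) l, Module.End.eigenspace L (μ : ℂ) with hE
  set Fm : Submodule ℂ Hm :=
    ⨆ μ ∈ Set.Icc (0 : ℝ) l,
      Module.End.eigenspace (LinearMap.adjoint d1 ∘ₗ d1) (μ : ℂ) with hFm
  set Fp : Submodule ℂ Hp :=
    ⨆ μ ∈ Set.Icc (0 : ℝ) l,
      Module.End.eigenspace (d2 ∘ₗ LinearMap.adjoint d2) (μ : ℂ) with hFp
  have hd' : LinearMap.adjoint d1 ∘ₗ LinearMap.adjoint d2 = 0 := by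
    rw [← LinearMap.adjoint_comp, hd]
    ext x
    simp [LinearMap.adjoint_inner_left]
  -- the map x ↦ (d1* x, d2 x) sends E into Fm × Fp
  have hmap : ∀ x ∈ E, LinearMap.adjoint d1 x ∈ Fm ∧ d2 x ∈ Fp := by
    have : E ≤ (Fm.comap (LinearMap.adjoint d1)) ⊓ (Fp.comap d2) := by
      apply iSup₂_le
      intro μ hμ x hx
      rw [Module.End.mem_eigenspace_iff] at hx
      have h1 : d1 (LinearMap.adjoint d1 x) + LinearMap.adjoint d2 (d2 x) = (μ : ℂ) • x := hx
      constructor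
      · refine Submodule.mem_comap.2 (Submodule.mem_iSup_of_mem μ
          (Submodule.mem_iSup_of_mem ⟨le_of_lt hμ.1, hμ.2⟩ ?_))
        rw [Module.End.mem_eigenspace_iff]
        have := congrArg (LinearMap.adjoint d1) h1
        simpa [map_add, LinearMap.comp_apply,
          show LinearMap.adjoint d1 (LinearMap.adjoint d2 (d2 x)) = 0 from
            congrFun (congrArg DFunLike.coe hd') (d2 x) ▸ by
              simpa using congrArg (fun f => f (d2 x)) hd'] using this
      · refine Submodule.mem_comap.2 (Submodule.mem_iSup_of_mem μ
          (Submodule.mem_iSup_of_mem ⟨le_of_lt hμ.1, hμ.2⟩ ?_))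
        rw [Module.End.mem_eigenspace_iff]
        have := congrArg d2 h1
        simpa [map_add, LinearMap.comp_apply,
          show d2 (d1 (LinearMap.adjoint d1 x)) = 0 by
            simpa using congrArg (fun f => f (LinearMap.adjoint d1 x)) hd] using this
    intro x hx
    exact ⟨(this hx).1, (this hx).2⟩
  -- define T : E →ₗ Fm × Fp
  let T : E →ₗ[ℂ] Fm × Fp :=
    { toFun := fun x => (⟨LinearMap.adjoint d1 x, (hmap x x.2).1⟩,
        ⟨d2 x, (hmap x x.2).2⟩)
      map_add' := by intro x y; ext <;> simp
      map_smul' := by intro c x; ext <;> simp }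
  have hinj : Function.Injective T := by
    rw [← LinearMap.ker_eq_bot, LinearMap.ker_eq_bot']
    rintro ⟨x, hx⟩ hTx
    have h1 : LinearMap.adjoint d1 x = 0 := congrArg (Subtype.val ∘ Prod.fst) hTx
    have h2 : d2 x = 0 := congrArg (Subtype.val ∘ Prod.snd) hTx
    have hLx : x ∈ Module.End.eigenspace L (0 : ℂ) := by
      rw [Module.End.mem_eigenspace_iff]
      show d1 (LinearMap.adjoint d1 x) + LinearMap.adjoint d2 (d2 x) = (0 : ℂ) • x
      simp [h1, h2]
    have hsub : E ≤ ⨆ ν ∈ {ν : ℂ | ν ≠ 0}, Module.End.eigenspace L ν := by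
      apply iSup₂_le
      intro μ hμ
      refine le_trans ?_ (le_iSup₂ (f := fun ν _ => Module.End.eigenspace L ν) (μ : ℂ)
        (show ((μ:ℂ)) ∈ {ν : ℂ | ν ≠ 0} from Complex.ofReal_ne_zero.2 (ne_of_gt hμ.1)))
      exact le_rfl
    have hdisj := (L.eigenspaces_iSupIndep (0 : ℂ))
    have : x = 0 := by
      have := hdisj.mono_right (le_trans hsub (by
        apply iSup₂_le
        intro ν hν
        exact le_iSup₂ (f := fun ν (_ : ν ≠ 0) => Module.End.eigenspace L ν) ν hν))
      exact (Submodule.disjoint_def.1 this) x hLx (hx)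
    exact Subtype.ext this
  calc Module.finrank ℂ E ≤ Module.finrank ℂ (Fm × Fp) :=
        LinearMap.finrank_le_finrank_of_injective hinj
    _ = Module.finrank ℂ Fm + Module.finrank ℂ Fp := Module.finrank_prod
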